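/- Let n ≥ 0 be an integer and let a, b be integers with b − n > 1 and a + b − n > 2 (so that all series below converge absolutely). Then Z(a, −n, b) = Σ_{j=0}^{n} (−1)^j binom(n, j) · ζ(b−n+j, a−j). -/

import Mathlib

/-!
Substituting `l₁ = α + β`, `l₂ = α` turns the Tornheim series into a sum over `l₁ > l₂ > 0`, and
the binomial expansion of `β ^ n = (l₁ - l₂) ^ n` splits each summand into the `n + 1` summands of
`ζ(b - n + j, a - j)`. Each of those double zeta series converges absolutely (compare with
`l₁ ^ (-3/2) l₂ ^ (-3/2)`), so the finite sum can be taken out of the series.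
-/

open Complex

noncomputable section

/-- The Tornheim-type double series `Z(a,b,c) = Σ_{α,β ≥ 1} α^{−a} β^{−b} (α+β)^{−c}`. -/
def Ztorn (a b c : ℤ) : ℂ :=
  ∑' p : ℕ+ × ℕ+,
    (((p.1 : ℕ) : ℂ)) ^ (-a) * (((p.2 : ℕ) : ℂ)) ^ (-b) *
      ((((p.1 : ℕ) + (p.2 : ℕ) : ℕ) : ℂ)) ^ (-c)

/-- The double zeta value `ζ(A,B) = Σ_{l₁>l₂>0} l₁^{−A} l₂^{−B}` (here `B` may be `≤ 0`). -/
def dzeta (A B : ℤ) : ℂ :=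
  ∑' p : {q : ℕ × ℕ // 0 < q.2 ∧ q.2 < q.1}, ((p.1.1 : ℕ) : ℂ) ^ (-A) * ((p.1.2 : ℕ) : ℂ) ^ (-B)

open Finset

abbrev DZetaIndex : Type := {q : ℕ × ℕ // 0 < q.2 ∧ q.2 < q.1}

lemma rpow_neg_mul_rpow_neg_le {x y A B s : ℝ} (hy : 1 ≤ y) (hyx : y ≤ x)
    (hsA : s ≤ A) (hsAB : 2 * s ≤ A + B) :
    x ^ (-A) * y ^ (-B) ≤ x ^ (-s) * y ^ (-s) := by
  have hy0 : 0 < y := one_pos.trans_le hy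
  have hx0 : 0 < x := hy0.trans_le hyx
  calc x ^ (-A) * y ^ (-B) = x ^ (-s) * (x ^ (s - A) * y ^ (-B)) := by
        rw [← mul_assoc, ← Real.rpow_add hx0]; ring_nf
    _ ≤ x ^ (-s) * (y ^ (s - A) * y ^ (-B)) := by
        gcongr ?_ * (?_ * _)
        exact Real.rpow_le_rpow_of_nonpos hy0 hyx (by linarith)
    _ = x ^ (-s) * y ^ (s - A - B) := by rw [← Real.rpow_add hy0]; ring_nf
    _ ≤ x ^ (-s) * y ^ (-s) :=
        mul_le_mul_of_nonneg_left (Real.rpow_le_rpow_of_exponent_le hy (by linarith)) (by positivity)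

lemma summable_dzeta_summand {A B : ℤ} (hA : 2 ≤ A) (hAB : 3 ≤ A + B) :
    Summable fun q : DZetaIndex => ((q.1.1 : ℂ)) ^ (-A) * ((q.1.2 : ℂ)) ^ (-B) := by
  have h : Summable fun n : ℕ => (n : ℝ) ^ (-(3 / 2) : ℝ) :=
    Real.summable_nat_rpow.2 (by norm_num)
  have hprod : Summable fun p : ℕ × ℕ => (p.1 : ℝ) ^ (-(3 / 2) : ℝ) * (p.2 : ℝ) ^ (-(3 / 2) : ℝ) :=
    h.mul_of_nonneg h (fun n => by positivity) (fun n => by positivity)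
  refine Summable.of_norm_bounded (hprod.subtype _) ?_
  rintro ⟨⟨l₁, l₂⟩, hl₂, hl₂₁⟩
  have hA' : (2 : ℝ) ≤ A := by exact_mod_cast hA
  have hAB' : (3 : ℝ) ≤ A + B := by exact_mod_cast hAB
  simp only [norm_mul, norm_zpow, norm_natCast, Function.comp, ← Real.rpow_intCast, Int.cast_neg]
  exact rpow_neg_mul_rpow_neg_le (Nat.one_le_cast.mpr hl₂) (Nat.cast_le.mpr hl₂₁.le)
    (by linarith) (by linarith)

def pnatPairEquivDZetaIndex : ℕ+ × ℕ+ ≃ DZetaIndex where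
  toFun p := ⟨((p.1 : ℕ) + p.2, p.1), p.1.pos, by have := p.2.pos; omega⟩
  invFun q := (⟨q.1.2, q.2.1⟩, ⟨q.1.1 - q.1.2, by have := q.2.2; omega⟩)
  left_inv := by
    rintro ⟨α, β⟩
    exact Prod.ext rfl (PNat.eq (by simp))
  right_inv := by
    rintro ⟨⟨l₁, l₂⟩, hl₂, hl₂₁⟩
    ext <;> simp only [PNat.mk_coe]; omega

lemma zpow_mul_sub_pow_mul_zpow {K : Type*} [Field K] {l₁ l₂ : K} (h₁ : l₁ ≠ 0) (h₂ : l₂ ≠ 0)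
    (a b : ℤ) (n : ℕ) :
    l₂ ^ (-a) * (l₁ - l₂) ^ n * l₁ ^ (-b) =
      ∑ j ∈ range (n + 1), (-1) ^ j * (n.choose j : K) * (l₁ ^ (-(b - n + j)) * l₂ ^ (-(a - j))) := by
  rw [sub_eq_neg_add, add_pow, mul_sum, sum_mul]
  refine sum_congr rfl fun j hj => ?_
  have hjn : j ≤ n := Nat.lt_succ_iff.mp (mem_range.mp hj)
  have h₁' : l₁ ^ (-(b - n + j)) = l₁ ^ (n - j) * l₁ ^ (-b) := by
    rw [← zpow_natCast, ← zpow_add₀ h₁]; push_cast [hjn]; ring_nf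
  have h₂' : l₂ ^ (-(a - j)) = l₂ ^ (-a) * l₂ ^ j := by
    rw [← zpow_natCast, ← zpow_add₀ h₂]; ring_nf
  rw [h₁', h₂', neg_pow]
  ring

theorem statement10
    (n : ℕ) (a b : ℤ) (hb : 1 < b - n) (hab : 2 < a + b - n) :
    Ztorn a (-(n : ℤ)) b =
      ∑ j ∈ Finset.range (n + 1),
        (-1 : ℂ) ^ j * (n.choose j : ℂ) * dzeta (b - n + j) (a - j) := by
  calc Ztorn a (-(n : ℤ)) b
      = ∑' q : DZetaIndex, ∑ j ∈ range (n + 1),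
          (-1 : ℂ) ^ j * (n.choose j : ℂ) * ((q.1.1 : ℂ) ^ (-(b - n + j)) * (q.1.2 : ℂ) ^ (-(a - j))) := by
        rw [Ztorn, ← pnatPairEquivDZetaIndex.tsum_eq]
        refine tsum_congr fun ⟨α, β⟩ => ?_
        have hβ : ((β : ℕ) : ℂ) = (((α : ℕ) + β : ℕ) : ℂ) - (α : ℕ) := by push_cast; ring
        rw [neg_neg, zpow_natCast, hβ]
        exact zpow_mul_sub_pow_mul_zpow (Nat.cast_ne_zero.mpr (Nat.add_pos_left α.pos _).ne')
          (Nat.cast_ne_zero.mpr α.ne_zero) a b n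
    _ = ∑ j ∈ range (n + 1), ∑' q : DZetaIndex,
          (-1 : ℂ) ^ j * (n.choose j : ℂ) * ((q.1.1 : ℂ) ^ (-(b - n + j)) * (q.1.2 : ℂ) ^ (-(a - j))) :=
        Summable.tsum_finsetSum fun j _ =>
          (summable_dzeta_summand (by omega) (by omega)).mul_left _
    _ = _ := by simp only [dzeta, tsum_mul_left]
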